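/- Let (Z, E) be a reflexive graph whose relation E is antisymmetric, and suppose the concept lattice of the associated polarity (Z, Z, I_{Eᶜ}) satisfies the completely distributive law. Then for all z, u ∈ Z: z E u if and only if u_s ≤ z_s in the concept lattice (equivalently, {z}^↑ ⊆ {u}^↑). -/

import Mathlib

/-!
Reflexivity makes every element of the extent of `z_s` an `E`-successor of `z`, which gives one
direction. For the other, suppose `z E u` but `u ∉ ext z_s`. Antisymmetry then gives both
`u_s ≤ z_s ⊔ u_r` and `u_s ⊓ z_s ≤ u_r`, so binary distributivity (the only instance of complete
distributivity needed) yields `u_s ≤ u_r`, i.e. `¬ u E u`.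
-/

open Set

universe u v

/-- The object concept `z_s = ({z}^{↑↓}, {z}^↑)` in the polarity associated with a
reflexive graph. -/
def objectConcept {A X : Type*} (I : A → X → Prop) (a : A) : Concept A X I where
  extent := lowerPolar I (upperPolar I {a})
  intent := upperPolar I {a}
  upperPolar_extent := upperPolar_lowerPolar_upperPolar (r := I) {a}
  lowerPolar_intent := rfl

theorem objectConcept_eq_ofObject {A X : Type*} (I : A → X → Prop) (a : A) :
    objectConcept I a = Concept.ofObject I a :=
  rfl

theorem objectConcept_le_iff {A X : Type*} {I : A → X → Prop} {a : A} {c : Concept A X I} :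
    objectConcept I a ≤ c ↔ a ∈ c.extent := by
  simp [objectConcept_eq_ofObject]

theorem inf_sup_le_of_iInf_iSup_eq {α : Type*} [CompleteLattice α]
    (h : ∀ (ι : Type u) (κ : ι → Type v) (f : (i : ι) → κ i → α),
      ⨅ i, ⨆ j, f i j = ⨆ g : (i : ι) → κ i, ⨅ i, f i (g i))
    (a b c : α) : a ⊓ (b ⊔ c) ≤ a ⊓ b ⊔ a ⊓ c := by
  let f : ULift.{u} Bool → ULift.{v} Bool → α := fun i j =>
    bif i.down then bif j.down then b else c else a
  have hlhs : ⨅ i, ⨆ j, f i j = (b ⊔ c) ⊓ a := by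
    simp only [f, iInf_ulift, iSup_ulift, iInf_bool_eq, iSup_bool_eq, cond_true, cond_false,
      sup_idem]
  calc a ⊓ (b ⊔ c) = ⨅ i, ⨆ j, f i j := by rw [hlhs, inf_comm]
    _ = ⨆ g : ULift.{u} Bool → ULift.{v} Bool, ⨅ i, f i (g i) := h _ _ f
    _ ≤ a ⊓ b ⊔ a ⊓ c := iSup_le fun g => by
      simp only [f, iInf_ulift, iInf_bool_eq, cond_true, cond_false]
      cases (g ⟨true⟩).down
      · exact inf_comm a c ▸ le_sup_right
      · exact inf_comm a b ▸ le_sup_left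

section ReflexiveGraph

variable {Z : Type*} {E : Z → Z → Prop}

theorem rel_of_mem_objectConcept_extent (hrefl : ∀ a, E a a) {z a : Z}
    (h : a ∈ (objectConcept (fun a x => ¬ E a x) z).extent) : E z a := by
  by_contra hza
  exact h ((mem_upperPolar_singleton _).2 hza) (hrefl a)

theorem objectConcept_le_sup_ofAttribute (hrefl : ∀ a, E a a)
    (hanti : ∀ z z' : Z, E z z' → E z' z → z = z') {z u : Z} (hzu : E z u) :
    objectConcept (fun a x => ¬ E a x) u ≤
      objectConcept (fun a x => ¬ E a x) z ⊔ Concept.ofAttribute (fun a x => ¬ E a x) u := by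
  rw [objectConcept_le_iff, Concept.extent_sup]
  rintro t ⟨htz, htu⟩ hut
  by_cases htu' : E t u
  · exact (mem_upperPolar_singleton _).1 htz (hanti u t hut htu' ▸ hzu)
  · exact htu ((mem_lowerPolar_singleton _).2 htu') (hrefl t)

theorem objectConcept_inf_le_ofAttribute (hrefl : ∀ a, E a a)
    (hanti : ∀ z z' : Z, E z z' → E z' z → z = z') {z u : Z}
    (hu : u ∉ (objectConcept (fun a x => ¬ E a x) z).extent) :
    objectConcept (fun a x => ¬ E a x) u ⊓ objectConcept (fun a x => ¬ E a x) z ≤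
      Concept.ofAttribute (fun a x => ¬ E a x) u := by
  rw [Concept.le_ofAttributes_iff, singleton_subset_iff, Concept.intent_inf]
  rintro a ⟨hau, haz⟩ hEau
  exact hu (hanti u a (rel_of_mem_objectConcept_extent hrefl hau) hEau ▸ haz)

end ReflexiveGraph

/-- If `(Z, E)` is a reflexive, antisymmetric graph whose associated concept lattice
satisfies the completely distributive law, then `z E u` iff `u_s ≤ z_s`. -/
theorem rel_iff_objectConcept_le {Z : Type*} (E : Z → Z → Prop)
    (hrefl : Reflexive E)
    (hanti : ∀ z z' : Z, E z z' → E z' z → z = z')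
    (hdist : ∀ (ι : Type u) (κ : ι → Type v)
      (f : (i : ι) → κ i → Concept Z Z (fun a x => ¬ E a x)),
      ⨅ i, ⨆ j, f i j = ⨆ g : (i : ι) → κ i, ⨅ i, f i (g i)) :
    ∀ z u : Z, E z u ↔
      objectConcept (fun a x => ¬ E a x) u ≤ objectConcept (fun a x => ¬ E a x) z := by
  intro z u
  refine ⟨fun hzu => ?_,
    fun h => rel_of_mem_objectConcept_extent hrefl (objectConcept_le_iff.1 h)⟩
  by_contra hle
  rw [objectConcept_le_iff] at hle
  set us := objectConcept (fun a x => ¬ E a x) u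
  set zs := objectConcept (fun a x => ¬ E a x) z
  set ur := Concept.ofAttribute (fun a x => ¬ E a x) u
  have hus_le_ur : us ≤ ur := calc
    us ≤ us ⊓ (zs ⊔ ur) := le_inf le_rfl (objectConcept_le_sup_ofAttribute hrefl hanti hzu)
    _ ≤ us ⊓ zs ⊔ us ⊓ ur := inf_sup_le_of_iInf_iSup_eq hdist us zs ur
    _ ≤ ur := sup_le (objectConcept_inf_le_ofAttribute hrefl hanti hle) inf_le_right
  exact Concept.ofObject_le_ofAttribute_iff.1 hus_le_ur (hrefl u)
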